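/- Let 0 < a ≤ b be real numbers and let X₁, …, X_N be i.i.d. real random variables on a probability space with a ≤ X₁ ≤ b almost surely. Then log E[X₁] − E[ log( (1/N)·Σ_{i=1}^{N} X_i ) ] ≤ (5/4)·N^(−2/3)·(b − a)/a. -/

import Mathlib

/-!
Let `S` be the empirical mean and `m = 𝔼[X₁] = 𝔼[S]`. For `x ≥ a`,
`log m - log x ≤ (m - x)/x = (m - x)/m + (x - m)²/(x m) ≤ (m - x)/m + (x - m)²/(a m)`,
and the linear term has mean zero, so the Jensen gap `log 𝔼[S] - 𝔼[log S]` is at most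
`Var[S]/(a m)`. Independence gives `Var[S] = Var[X₁]/N`, and the Bhatia–Davis inequality
`Var[X₁] ≤ (b - m)(m - a) ≤ (b - a) m` leaves `(b - a)/(a N) ≤ (5/4) N^(-2/3) (b - a)/a`.
-/

open MeasureTheory ProbabilityTheory

lemma Real.log_sub_log_le_of_le {a m x : ℝ} (ha : 0 < a) (hm : 0 < m) (hax : a ≤ x) :
    Real.log m - Real.log x ≤ (m - x) / m + (x - m) ^ 2 / (a * m) := by
  have hx : 0 < x := ha.trans_le hax
  calc Real.log m - Real.log x = Real.log (m / x) := (Real.log_div hm.ne' hx.ne').symm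
    _ ≤ m / x - 1 := Real.log_le_sub_one_of_pos (by positivity)
    _ = (m - x) / m + (x - m) ^ 2 / (x * m) := by field_simp; ring
    _ ≤ (m - x) / m + (x - m) ^ 2 / (a * m) := by gcongr

lemma Real.inv_le_rpow_neg {x s : ℝ} (hx : 1 ≤ x) (hs : s ≤ 1) : x⁻¹ ≤ x ^ (-s) := by
  simpa [Real.rpow_neg_one] using Real.rpow_le_rpow_of_exponent_le hx (neg_le_neg hs)

section

variable {Ω : Type*} [MeasurableSpace Ω] {μ : Measure Ω} [IsProbabilityMeasure μ]
  {Y : Ω → ℝ} {a : ℝ}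

lemma const_le_integral (hY : Integrable Y μ) (hbd : ∀ᵐ ω ∂μ, a ≤ Y ω) :
    a ≤ μ[Y] := by
  simpa using integral_mono_ae (integrable_const a) hY hbd

lemma integrable_log_of_le (hY : Integrable Y μ) (ha : 0 < a) (hbd : ∀ᵐ ω ∂μ, a ≤ Y ω) :
    Integrable (fun ω => Real.log (Y ω)) μ := by
  refine (hY.abs.add (integrable_const |Real.log a|)).mono'
    (Real.measurable_log.comp_aemeasurable hY.aemeasurable).aestronglyMeasurable ?_
  filter_upwards [hbd] with ω hω
  have hY_pos : 0 < Y ω := ha.trans_le hω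
  rw [Real.norm_eq_abs, Pi.add_apply, abs_le]
  constructor
  · linarith [Real.log_le_log ha hω, neg_abs_le (Real.log a), abs_nonneg (Y ω)]
  · linarith [Real.log_le_sub_one_of_pos hY_pos, le_abs_self (Y ω), abs_nonneg (Real.log a)]

lemma log_integral_sub_integral_log_le (hY : MemLp Y 2 μ) (ha : 0 < a)
    (hbd : ∀ᵐ ω ∂μ, a ≤ Y ω) :
    Real.log μ[Y] - μ[fun ω => Real.log (Y ω)] ≤ Var[Y; μ] / (a * μ[Y]) := by
  have hint := hY.integrable one_le_two
  set m := μ[Y]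
  have hm : 0 < m := ha.trans_le (const_le_integral hint hbd)
  have hlin : Integrable (fun ω => (m - Y ω) / m) μ :=
    ((integrable_const m).sub hint).div_const m
  have hsq : Integrable (fun ω => (Y ω - m) ^ 2 / (a * m)) μ :=
    (hY.sub (memLp_const m)).integrable_sq.div_const _
  calc Real.log m - μ[fun ω => Real.log (Y ω)] = μ[fun ω => Real.log m - Real.log (Y ω)] := by
        rw [integral_sub (integrable_const _) (integrable_log_of_le hint ha hbd)]
        simp
    _ ≤ μ[fun ω => (m - Y ω) / m + (Y ω - m) ^ 2 / (a * m)] := by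
        refine integral_mono_ae ((integrable_const _).sub (integrable_log_of_le hint ha hbd))
          (hlin.add hsq) ?_
        filter_upwards [hbd] with ω hω using Real.log_sub_log_le_of_le ha hm hω
    _ = Var[Y; μ] / (a * m) := by
        rw [integral_add hlin hsq, integral_div, integral_div,
          integral_sub (integrable_const m) hint, variance_eq_integral hint.aemeasurable]
        simp [m]

lemma variance_le_mul_integral {b : ℝ} (ha : 0 ≤ a)
    (hbd : ∀ᵐ ω ∂μ, Y ω ∈ Set.Icc a b) (hY : AEMeasurable Y μ) :
    Var[Y; μ] ≤ (b - a) * μ[Y] := by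
  have hint := (memLp_of_bounded hbd hY.aestronglyMeasurable 1).integrable le_rfl
  have ham : a ≤ μ[Y] := const_le_integral hint (hbd.mono fun _ h => h.1)
  have hmb : μ[Y] ≤ b := by
    simpa using integral_mono_ae hint (integrable_const b) (hbd.mono fun _ h => h.2)
  calc Var[Y; μ] ≤ (b - μ[Y]) * (μ[Y] - a) := variance_le_sub_mul_sub hbd hY
    _ ≤ (b - a) * μ[Y] := by gcongr <;> linarith

end

section EmpiricalMean

variable {Ω : Type*} {X : ℕ → Ω → ℝ} {N : ℕ}

noncomputable def empiricalMean (X : ℕ → Ω → ℝ) (N : ℕ) (ω : Ω) : ℝ :=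
  (1 / N) * ∑ i ∈ Finset.range N, X i ω

lemma le_empiricalMean {a : ℝ} {ω : Ω} (hN : 1 ≤ N) (h : ∀ i, a ≤ X i ω) :
    a ≤ empiricalMean X N ω := by
  have hN' : (0 : ℝ) < N := by exact_mod_cast hN
  rw [empiricalMean, one_div, le_inv_mul_iff₀ hN']
  simpa using Finset.card_nsmul_le_sum (Finset.range N) (X · ω) a fun i _ => h i

variable [MeasurableSpace Ω] {μ : Measure Ω}

lemma memLp_empiricalMean {p : ENNReal} (h : ∀ i, MemLp (X i) p μ) :
    MemLp (empiricalMean X N) p μ :=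
  (memLp_finsetSum _ fun i _ => h i).const_mul _

lemma integral_empiricalMean (hN : 1 ≤ N) (hint : ∀ i, Integrable (X i) μ)
    (hid : ∀ i, IdentDistrib (X i) (X 0) μ μ) :
    μ[empiricalMean X N] = μ[X 0] := by
  have hN' : (N : ℝ) ≠ 0 := by positivity
  simp only [empiricalMean]
  rw [integral_const_mul, integral_finsetSum _ fun i _ => hint i,
    Finset.sum_congr rfl fun i _ => (hid i).integral_eq]
  simp [hN']

lemma variance_empiricalMean (hmem : ∀ i, MemLp (X i) 2 μ)
    (hindep : Pairwise fun i j => X i ⟂ᵢ[μ] X j)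
    (hid : ∀ i, IdentDistrib (X i) (X 0) μ μ) :
    Var[empiricalMean X N; μ] = Var[X 0; μ] / N := by
  have hsum : empiricalMean X N = fun ω => (1 / N : ℝ) * (∑ i ∈ Finset.range N, X i) ω := by
    ext ω; simp [empiricalMean]
  rw [hsum, variance_const_mul, IndepFun.variance_sum (fun i _ => hmem i)
    (fun i _ j _ hij => hindep hij), Finset.sum_congr rfl fun i _ => (hid i).variance_eq]
  rcases N.eq_zero_or_pos with rfl | hN
  · simp
  · field_simp
    simp

lemma log_integral_sub_integral_log_empiricalMean_le [IsProbabilityMeasure μ] {a b : ℝ}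
    (ha : 0 < a) (hN : 1 ≤ N) (hindep : Pairwise fun i j => X i ⟂ᵢ[μ] X j)
    (hid : ∀ i, IdentDistrib (X i) (X 0) μ μ) (hbd : ∀ᵐ ω ∂μ, X 0 ω ∈ Set.Icc a b) :
    Real.log μ[X 0] - μ[fun ω => Real.log (empiricalMean X N ω)] ≤ (b - a) / (a * N) := by
  have hbdi : ∀ i, ∀ᵐ ω ∂μ, X i ω ∈ Set.Icc a b :=
    fun i => (hid i).symm.ae_mem_snd measurableSet_Icc hbd
  have hmem : ∀ i, MemLp (X i) 2 μ := fun i =>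
    memLp_of_bounded (hbdi i) (hid i).aemeasurable_fst.aestronglyMeasurable 2
  have hint : ∀ i, Integrable (X i) μ := fun i => (hmem i).integrable one_le_two
  have hS_ge : ∀ᵐ ω ∂μ, a ≤ empiricalMean X N ω :=
    (ae_all_iff.2 hbdi).mono fun ω h => le_empiricalMean hN fun i => (h i).1
  have hm : 0 < μ[X 0] := ha.trans_le (const_le_integral (hint 0) (hbd.mono fun _ h => h.1))
  calc Real.log μ[X 0] - μ[fun ω => Real.log (empiricalMean X N ω)]
      ≤ Var[empiricalMean X N; μ] / (a * μ[X 0]) :=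
        integral_empiricalMean hN hint hid ▸
          log_integral_sub_integral_log_le (memLp_empiricalMean hmem) ha hS_ge
    _ = Var[X 0; μ] / N / (a * μ[X 0]) := by rw [variance_empiricalMean hmem hindep hid]
    _ ≤ (b - a) * μ[X 0] / N / (a * μ[X 0]) := by
        gcongr
        exact variance_le_mul_integral ha.le hbd (hid 0).aemeasurable_fst
    _ = (b - a) / (a * N) := by field_simp

end EmpiricalMean

theorem log_mean_concentration_general
    {Ω : Type*} [MeasurableSpace Ω] (μ : Measure Ω) [IsProbabilityMeasure μ]
    (a b : ℝ) (ha : 0 < a)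
    (N : ℕ) (hN : 1 ≤ N)
    (X : ℕ → Ω → ℝ)
    (hindep : iIndepFun X μ)
    (hid : ∀ i, IdentDistrib (X i) (X 0) μ μ)
    (hbd : ∀ᵐ ω ∂μ, a ≤ X 0 ω ∧ X 0 ω ≤ b) :
    Real.log (μ[X 0]) -
        μ[fun ω => Real.log ((1 / N) * ∑ i ∈ Finset.range N, X i ω)] ≤
      (5 / 4) * (N : ℝ) ^ (-(2 : ℝ) / 3) * (b - a) / a := by
  have hpow : (N : ℝ)⁻¹ ≤ (5 / 4) * (N : ℝ) ^ (-(2 : ℝ) / 3) := by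
    have := Real.inv_le_rpow_neg (s := 2 / 3) (x := N) (by exact_mod_cast hN) (by norm_num)
    rw [neg_div]
    linarith [Real.rpow_nonneg (Nat.cast_nonneg N) (-(2 / 3 : ℝ))]
  have hab : a ≤ b := hbd.exists.elim fun _ h => h.1.trans h.2
  calc Real.log (μ[X 0]) - μ[fun ω => Real.log (empiricalMean X N ω)]
      ≤ (b - a) / a * (N : ℝ)⁻¹ :=
        (log_integral_sub_integral_log_empiricalMean_le ha hN
          (fun i j hij => hindep.indepFun hij) hid hbd).trans_eq (by ring)
    _ ≤ (b - a) / a * ((5 / 4) * (N : ℝ) ^ (-(2 : ℝ) / 3)) := by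
        gcongr
    _ = (5 / 4) * (N : ℝ) ^ (-(2 : ℝ) / 3) * (b - a) / a := by ring

/-- Concentration estimate: for i.i.d. random variables `X₁, …, X_N` with
`a ≤ X₁ ≤ b` almost surely (`0 < a ≤ b`),
`log E[X₁] − E[log((1/N)·Σ_{i=1}^N X_i)] ≤ (5/4)·N^(−2/3)·(b − a)/a`. -/
theorem log_mean_concentration
    {Ω : Type*} [MeasurableSpace Ω] (μ : Measure Ω) [IsProbabilityMeasure μ]
    (a b : ℝ) (ha : 0 < a) (hab : a ≤ b)
    (N : ℕ) (hN : 1 ≤ N)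
    (X : ℕ → Ω → ℝ) (hX : ∀ i, Measurable (X i))
    (hindep : iIndepFun X μ)
    (hid : ∀ i, IdentDistrib (X i) (X 0) μ μ)
    (hbd : ∀ᵐ ω ∂μ, a ≤ X 0 ω ∧ X 0 ω ≤ b) :
    Real.log (μ[X 0]) -
        μ[fun ω => Real.log ((1 / N) * ∑ i ∈ Finset.range N, X i ω)] ≤
      (5 / 4) * (N : ℝ) ^ (-(2 : ℝ) / 3) * (b - a) / a :=
  log_mean_concentration_general μ a b ha N hN X hindep hid hbd
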